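/- Let I be a nonempty finite set, p : I → ℝ with p(i) > 0 for all i and Σᵢ p(i) = 1, r : I → ℝ, β' > 0, and let σ(t) = (1 + exp(−t))⁻¹ denote the logistic function. Then, as t → ∞, Σᵢ p(i) · ( σ(r(i) − t)^{1/β'} / (Σⱼ p(j)·σ(r(j) − t)^{1/β'}) ) · σ(t − r(i)) → 1 (real powers). That is, the total Dr.DPO influence weight—combining the DRO reweighting factor w(s) = σ(g(s))^{1/β'}/E[σ(g)^{1/β'}] with the DPO weight σ(−g(s))—converges to 1, not to 0, as all flipped margins g(i) = r(i) − t tend to −∞; hence Dr.DPO is not redescending. -/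

import Mathlib

open Filter Topology Finset

noncomputable def logistic (t : ℝ) : ℝ := (1 + Real.exp (-t))⁻¹

lemma logistic_pos (t : ℝ) : 0 < logistic t := by
  unfold logistic; positivity

lemma logistic_le_one (t : ℝ) : logistic t ≤ 1 := by
  unfold logistic
  rw [inv_le_one_iff₀]
  right
  linarith [Real.exp_pos (-t)]

lemma logistic_mono {s t : ℝ} (h : s ≤ t) : logistic s ≤ logistic t := by
  unfold logistic
  have := Real.exp_le_exp.mpr (neg_le_neg h)
  have h1 : (0:ℝ) < 1 + Real.exp (-t) := by positivity
  apply inv_anti₀ h1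
  linarith

lemma logistic_tendsto : Tendsto logistic atTop (𝓝 1) := by
  have h : Tendsto (fun t : ℝ => 1 + Real.exp (-t)) atTop (𝓝 1) := by
    have h0 : Tendsto (fun t : ℝ => Real.exp (-t)) atTop (𝓝 0) :=
      Real.tendsto_exp_atBot.comp tendsto_neg_atTop_atBot
    simpa using tendsto_const_nhds.add h0
  have := h.inv₀ one_ne_zero
  exact (by simpa using this : Tendsto (fun x : ℝ => (1 + Real.exp (-x))⁻¹) atTop (𝓝 1))

theorem stmt9 {I : Type*} [Fintype I] [Nonempty I]
    (p : I → ℝ) (hp : ∀ i, 0 < p i) (hsum : ∑ i, p i = 1)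
    (r : I → ℝ) (β' : ℝ) (hβ' : 0 < β') :
    Tendsto (fun t => ∑ i, p i *
        (logistic (r i - t) ^ (1 / β') / (∑ j, p j * logistic (r j - t) ^ (1 / β')))
        * logistic (t - r i))
      atTop (𝓝 (1 : ℝ)) := by
  have hne : (Finset.univ : Finset I).Nonempty := Finset.univ_nonempty
  set M := Finset.univ.sup' hne r with hM
  have hrM : ∀ i, r i ≤ M := fun i => Finset.le_sup' r (Finset.mem_univ i)
  have hD : ∀ t : ℝ, 0 < ∑ j, p j * logistic (r j - t) ^ (1 / β') := by
    intro t
    exact Finset.sum_pos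
      (fun j _ => mul_pos (hp j) (Real.rpow_pos_of_pos (logistic_pos _) _)) hne
  have key : ∀ t : ℝ, ∑ i, p i *
      (logistic (r i - t) ^ (1 / β') / (∑ j, p j * logistic (r j - t) ^ (1 / β'))) = 1 := by
    intro t
    simp_rw [← mul_div_assoc]
    rw [← Finset.sum_div, div_self (hD t).ne']
  have hw : ∀ t i, 0 ≤ p i *
      (logistic (r i - t) ^ (1 / β') / (∑ j, p j * logistic (r j - t) ^ (1 / β'))) := by
    intro t i
    exact mul_nonneg (hp i).le
      (div_nonneg (Real.rpow_nonneg (logistic_pos _).le _) (hD t).le)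
  have hlow : Tendsto (fun t => logistic (t - M)) atTop (𝓝 1) := by
    have : Tendsto (fun t : ℝ => t - M) atTop atTop :=
      tendsto_atTop_add_const_right atTop (-M) tendsto_id |>.congr (by
        intro x; simp [sub_eq_add_neg])
    exact logistic_tendsto.comp this
  apply tendsto_of_tendsto_of_tendsto_of_le_of_le' hlow tendsto_const_nhds
  · filter_upwards with t
    calc logistic (t - M)
        = (∑ i, p i * (logistic (r i - t) ^ (1 / β') /
            (∑ j, p j * logistic (r j - t) ^ (1 / β')))) * logistic (t - M) := by
          rw [key t, one_mul]
      _ = ∑ i, p i * (logistic (r i - t) ^ (1 / β') /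
            (∑ j, p j * logistic (r j - t) ^ (1 / β'))) * logistic (t - M) := by
          rw [Finset.sum_mul]
      _ ≤ _ := by
          apply Finset.sum_le_sum
          intro i _
          exact mul_le_mul_of_nonneg_left
            (logistic_mono (by linarith [hrM i])) (hw t i)
  · filter_upwards with t
    calc ∑ i, p i * (logistic (r i - t) ^ (1 / β') /
            (∑ j, p j * logistic (r j - t) ^ (1 / β'))) * logistic (t - r i)
        ≤ ∑ i, p i * (logistic (r i - t) ^ (1 / β') /
            (∑ j, p j * logistic (r j - t) ^ (1 / β'))) := by
          apply Finset.sum_le_sum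
          intro i _
          nth_rewrite 2 [← mul_one (p i * _)]
          exact mul_le_mul_of_nonneg_left (logistic_le_one _) (hw t i)
      _ = 1 := key t
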